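/- arXiv:1801.08828 — 2 statements merged into one kernel-verified Lean document; each statement's English description precedes it below -/
import Mathlib

section
/- Asymptotics of the effective operators for large momenta (power case): fix α ≥ 0 and suppose that for every P ∈ ℝⁿ there is a classical solution (u_P, m_P, H̄(P)) of the power-type ergodic MFG system, with effective drift b̄(P) = ∫_Q (∇u_P + P) m_P dy. Then H̄(P)/|P|² → 1/2 and |b̄(P) − P|/|P| → 0 as |P| → ∞. -/
open MeasureTheory Real

/-- Partial derivative in direction `i`. -/
noncomputable def pd {n : ℕ} (i : Fin n) (f : (Fin n → ℝ) → ℝ) (x : Fin n → ℝ) : ℝ :=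
  fderiv ℝ f x (Pi.single i 1)

/-- Laplacian: sum of second partial derivatives. -/
noncomputable def lap {n : ℕ} (f : (Fin n → ℝ) → ℝ) (x : Fin n → ℝ) : ℝ :=
  ∑ i, pd i (pd i f) x

/-- Divergence of a vector field. -/
noncomputable def dvg {n : ℕ} (F : (Fin n → ℝ) → Fin n → ℝ) (x : Fin n → ℝ) : ℝ :=
  ∑ i, pd i (fun y => F y i) x

/-- `ℤⁿ`-periodicity. -/
def ZPeriodic {n : ℕ} (f : (Fin n → ℝ) → ℝ) : Prop :=
  ∀ (k : Fin n → ℤ) (x : Fin n → ℝ), f (x + fun i => (k i : ℝ)) = f x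

/-- The unit cube `Q = [0,1]ⁿ`. -/
def unitCube (n : ℕ) : Set (Fin n → ℝ) := Set.Icc 0 1

/-- A classical solution `(u, m, H)` of the power-type ergodic MFG system
`-Δu + ½|∇u+P|² - v - αᑫ mᑫ = H`, `-Δm - div(m(∇u+P)) = 0`, `∫ u = 0`, `∫ m = 1`. -/
structure PowerMFG {n : ℕ} (v : (Fin n → ℝ) → ℝ) (P : Fin n → ℝ) (α q : ℝ)
    (u m : (Fin n → ℝ) → ℝ) (H : ℝ) : Prop where
  hu : ContDiff ℝ 2 u
  hm : ContDiff ℝ 2 m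
  hup : ZPeriodic u
  hmp : ZPeriodic m
  hmpos : ∀ x, 0 < m x
  hHJB : ∀ x, -lap u x + (∑ i, (pd i u x + P i) ^ 2) / 2 - v x - α ^ q * (m x) ^ q = H
  hFP : ∀ x, -lap m x - dvg (fun y j => m y * (pd j u y + P j)) x = 0
  humean : (∫ y in unitCube n, u y) = 0
  hmmean : (∫ y in unitCube n, m y) = 1

variable {n : ℕ}

lemma contDiff_pd {f : (Fin n → ℝ) → ℝ} (hf : ContDiff ℝ 2 f) (i : Fin n) :
    ContDiff ℝ 1 (pd i f) :=
  (hf.fderiv_right (by norm_num)).clm_apply contDiff_const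

lemma continuous_pd {f : (Fin n → ℝ) → ℝ} (hf : ContDiff ℝ 1 f) (i : Fin n) :
    Continuous (pd i f) :=
  ((hf.continuous_fderiv one_ne_zero).clm_apply continuous_const)

lemma zperiodic_pd {f : (Fin n → ℝ) → ℝ} (hf : ContDiff ℝ 1 f) (hper : ZPeriodic f)
    (i : Fin n) : ZPeriodic (pd i f) := by
  intro k x
  unfold pd
  congr 1
  set c : Fin n → ℝ := fun i => (k i : ℝ)
  have h1 : HasFDerivAt f (fderiv ℝ f (x + c)) (x + c) :=
    (hf.differentiable one_ne_zero (x + c)).hasFDerivAt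
  have h2 : HasFDerivAt (fun y : Fin n → ℝ => y + c) (ContinuousLinearMap.id ℝ _) x :=
    (hasFDerivAt_id x).add_const c
  have h3 := h1.comp x h2
  have h4 : f ∘ (fun y => y + c) = f := funext fun y => hper k y
  rw [h4, ContinuousLinearMap.comp_id] at h3
  exact h3.fderiv.symm

lemma pd_mul {f g : (Fin n → ℝ) → ℝ} {x : Fin n → ℝ} (hf : DifferentiableAt ℝ f x)
    (hg : DifferentiableAt ℝ g x) (i : Fin n) :
    pd i (fun y => f y * g y) x = pd i f x * g x + f x * pd i g x := by
  unfold pd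
  rw [fderiv_fun_mul hf hg]
  simp [add_comm, mul_comm]

lemma zperiodic_mul {f g : (Fin n → ℝ) → ℝ} (hf : ZPeriodic f) (hg : ZPeriodic g) :
    ZPeriodic (fun y => f y * g y) := fun k x => by simp [hf k x, hg k x]

lemma measurableSet_unitCube : MeasurableSet (unitCube n) := measurableSet_Icc

lemma integrableOn_unitCube {h : (Fin n → ℝ) → ℝ} (hh : Continuous h) :
    IntegrableOn h (unitCube n) := hh.integrableOn_Icc

lemma integral_pd_eq_zero {n : ℕ} {g : (Fin (n + 1) → ℝ) → ℝ} (hg : ContDiff ℝ 1 g)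
    (hper : ZPeriodic g) (i : Fin (n + 1)) :
    ∫ y in unitCube (n + 1), pd i g y = 0 := by
  classical
  have hdiff : ∀ x, HasFDerivAt g (fderiv ℝ g x) x := fun x =>
    (hg.differentiable one_ne_zero x).hasFDerivAt
  have key := MeasureTheory.integral_divergence_of_hasFDerivAt_off_countable'
    (a := (0 : Fin (n+1) → ℝ)) (b := (1 : Fin (n+1) → ℝ)) (by intro j; norm_num)
    (fun j x => if j = i then g x else 0)
    (fun j x => if j = i then fderiv ℝ g x else 0)
    ∅ Set.countable_empty
    (fun j => by
      rcases eq_or_ne j i with rfl | hj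
      · simpa using (hg.continuous).continuousOn
      · simp [hj]; exact continuousOn_const)
    (fun x _ j => by
      rcases eq_or_ne j i with rfl | hj
      · simpa using hdiff x
      · simp [hj]; exact hasFDerivAt_const 0 x)
    (by
      have : ∀ x : Fin (n+1) → ℝ, (∑ j, (if j = i then fderiv ℝ g x else 0) (Pi.single j 1)) = pd i g x := by
        intro x
        rw [Finset.sum_eq_single i]
        · simp [pd]
        · intro j _ hj; simp [hj]
        · simp
      simp only [this]
      exact (continuous_pd hg i).integrableOn_Icc)
  have hsum : ∀ x : Fin (n+1) → ℝ,
      (∑ j, (if j = i then fderiv ℝ g x else 0) (Pi.single j 1)) = pd i g x := by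
    intro x
    rw [Finset.sum_eq_single i]
    · simp [pd]
    · intro j _ hj; simp [hj]
    · simp
  simp only [hsum] at key
  have hface : ∀ x : Fin n → ℝ,
      g (i.insertNth ((1 : Fin (n+1) → ℝ) i) x) = g (i.insertNth ((0 : Fin (n+1) → ℝ) i) x) := by
    intro x
    have hx : i.insertNth (0:ℝ) x + (fun j => (((Pi.single i 1 : Fin (n+1) → ℤ)) j : ℝ))
        = i.insertNth (1:ℝ) x := by
      funext j
      refine i.succAboveCases ?_ ?_ j
      · simp
      · intro j
        have hne := Fin.succAbove_ne i j
        simp [Pi.single_apply, hne, Fin.insertNth_apply_succAbove]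
    have := hper (Pi.single i 1) (i.insertNth (0:ℝ) x)
    rw [hx] at this
    simpa using this
  rw [show unitCube (n+1) = Set.Icc (0 : Fin (n+1) → ℝ) 1 from rfl, key, Finset.sum_eq_single i]
  · simp only [if_pos rfl, if_true]
    rw [setIntegral_congr_fun measurableSet_Icc (fun x _ => hface x)]
    ring
  · intro j _ hj; simp [hj]
  · simp

lemma volume_unitCube : (volume (unitCube (n+1))).toReal = 1 := by
  simp [unitCube, Real.volume_Icc_pi]

lemma integral_const_unitCube (c : ℝ) : ∫ _ in unitCube (n+1), c = c := by
  rw [setIntegral_const, measureReal_def, volume_unitCube, smul_eq_mul, one_mul]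

lemma integral_pd_mul {n : ℕ} {f g : (Fin (n+1) → ℝ) → ℝ} (hf : ContDiff ℝ 1 f)
    (hg : ContDiff ℝ 1 g) (hfp : ZPeriodic f) (hgp : ZPeriodic g) (i : Fin (n+1)) :
    ∫ y in unitCube (n+1), pd i f y * g y = - ∫ y in unitCube (n+1), f y * pd i g y := by
  have h0 := integral_pd_eq_zero (hf.mul hg) (zperiodic_mul hfp hgp) i
  have h1 : ∀ y, pd i (fun y => f y * g y) y = pd i f y * g y + f y * pd i g y := fun y =>
    pd_mul (hf.differentiable one_ne_zero y) (hg.differentiable one_ne_zero y) i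
  rw [setIntegral_congr_fun measurableSet_unitCube (fun y _ => h1 y),
    integral_add (integrableOn_unitCube ((continuous_pd hf i).fun_mul hg.continuous))
      (integrableOn_unitCube (hf.continuous.fun_mul (continuous_pd hg i)))] at h0
  linarith

lemma cs_cube {f w : (Fin (n+1) → ℝ) → ℝ} (hf : Continuous f) (hw : Continuous w)
    (hw0 : ∀ x, 0 ≤ w x) (hw1 : (∫ y in unitCube (n+1), w y) = 1) :
    (∫ y in unitCube (n+1), f y * w y) ^ 2 ≤ ∫ y in unitCube (n+1), f y ^ 2 * w y := by
  set c := ∫ y in unitCube (n+1), f y * w y with hc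
  have h0 : 0 ≤ ∫ y in unitCube (n+1), (f y - c) ^ 2 * w y :=
    setIntegral_nonneg measurableSet_unitCube (fun y _ => mul_nonneg (sq_nonneg _) (hw0 y))
  have I1 : IntegrableOn (fun y => f y ^ 2 * w y) (unitCube (n+1)) :=
    integrableOn_unitCube ((hf.pow 2).mul hw)
  have I2 : IntegrableOn (fun y => 2 * c * (f y * w y)) (unitCube (n+1)) :=
    integrableOn_unitCube (continuous_const.mul (hf.mul hw))
  have I3 : IntegrableOn (fun y => c ^ 2 * w y) (unitCube (n+1)) :=
    integrableOn_unitCube (continuous_const.mul hw)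
  have I12 : IntegrableOn (fun y => f y ^ 2 * w y - 2 * c * (f y * w y)) (unitCube (n+1)) :=
    I1.sub I2
  have hexp : ∀ y, (f y - c) ^ 2 * w y
      = f y ^ 2 * w y - 2 * c * (f y * w y) + c ^ 2 * w y := by intro y; ring
  rw [setIntegral_congr_fun measurableSet_unitCube (fun y _ => hexp y),
    integral_add I12 I3, integral_sub I1 I2, integral_const_mul, integral_const_mul,
    hw1, ← hc] at h0
  nlinarith [h0]

lemma aux_amgm {x p t b2v : ℝ} (h1 : x^2 ≤ p*b2v) (h2 : b2v ≤ t) (hp : 0 ≤ p) (ht : 0 ≤ t)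
    (hb : 0 ≤ b2v) : x ≤ (p+t)/2 := by
  nlinarith [sq_nonneg (p - t), sq_nonneg (x - (p+t)/2), sq_nonneg (x + (p+t)/2)]

lemma aux_i1 {a b : ℝ} (h1 : a ≤ 1) (h : b ≤ 1) : a ≤ a*b + (1-b) := by nlinarith

lemma aux_i2 {a b : ℝ} (h1 : 1 ≤ a) (h : 1 ≤ b) : a ≤ a*b + (1-b) := by nlinarith

lemma aux_i3 {a b c : ℝ} (h1 : a ≤ c) (h0 : 0 ≤ a*b) : a ≤ a*b/2 + c := by linarith

lemma aux_i4 {a b c : ℝ} (h1 : 0 ≤ a*(b/2 - 1)) (h2 : 0 ≤ c) : a ≤ a*b/2 + c := by nlinarith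

set_option maxHeartbeats 2000000 in
lemma key_bounds {n : ℕ} {v : (Fin (n+1) → ℝ) → ℝ} (hv0 : ∀ x, 0 ≤ v x) (hvc : Continuous v)
    {α q : ℝ} (hα : 0 ≤ α) (hq : 0 < q)
    {P : Fin (n+1) → ℝ} {u m : (Fin (n+1) → ℝ) → ℝ} {H : ℝ}
    (sol : PowerMFG v P α q u m H) {b : Fin (n+1) → ℝ}
    (hb : ∀ i, b i = ∫ y in unitCube (n+1), (pd i u y + P i) * m y) :
    |H - (∑ i, (P i) ^ 2) / 2| ≤ 3 * (∫ y in unitCube (n+1), v y) + 2 * (α ^ q * 2 ^ q)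
    ∧ (∑ i, (b i - P i) ^ 2) ≤ 2 * (∫ y in unitCube (n+1), v y) := by
  classical
  set Q := unitCube (n+1) with hQdef
  have hQ : MeasurableSet Q := measurableSet_unitCube
  -- abbreviations
  set V : ℝ := ∫ y in Q, v y with hV
  set W : ℝ := ∫ y in Q, v y * m y with hW
  set X : ℝ := α ^ q * ∫ y in Q, m y ^ q with hX
  set Y : ℝ := α ^ q * ∫ y in Q, m y ^ q * m y with hY
  set S : ℝ := ∫ y in Q, ∑ i, (pd i u y + P i) ^ 2 with hS
  set T : ℝ := ∫ y in Q, (∑ i, (pd i u y + P i) ^ 2) * m y with hT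
  set p2 : ℝ := ∑ i, (P i) ^ 2 with hp2
  set bP : ℝ := ∑ i, P i * b i with hbP
  set b2 : ℝ := ∑ i, (b i) ^ 2 with hb2
  -- regularity facts
  have cu1 : ContDiff ℝ 1 u := sol.hu.of_le one_le_two
  have cm1 : ContDiff ℝ 1 m := sol.hm.of_le one_le_two
  have cpd : ∀ i, ContDiff ℝ 1 (pd i u) := fun i => contDiff_pd sol.hu i
  have cpdm : ∀ i, ContDiff ℝ 1 (pd i m) := fun i => contDiff_pd sol.hm i
  have cm : Continuous m := sol.hm.continuous
  have ca : ∀ i, Continuous (fun y => pd i u y + P i) := fun i =>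
    (continuous_pd cu1 i).add continuous_const
  have cS : Continuous (fun y => ∑ i, (pd i u y + P i) ^ 2) :=
    continuous_finset_sum _ (fun i _ => (ca i).pow 2)
  have cmq : Continuous (fun y => m y ^ q) := cm.rpow_const (fun x => Or.inr hq.le)
  have claplu : Continuous (lap u) := by
    unfold lap; exact continuous_finset_sum _ (fun i _ => continuous_pd (cpd i) i)
  have claplm : Continuous (lap m) := by
    unfold lap; exact continuous_finset_sum _ (fun i _ => continuous_pd (cpdm i) i)
  have hm0 : ∀ y, 0 ≤ m y := fun y => (sol.hmpos y).le
  have hαq : (0:ℝ) ≤ α ^ q := Real.rpow_nonneg hα q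
  -- basic integrals
  have hpdu0 : ∀ i, (∫ y in Q, pd i u y) = 0 := fun i =>
    integral_pd_eq_zero cu1 sol.hup i
  have hlap0 : (∫ y in Q, lap u y) = 0 := by
    have : (∫ y in Q, lap u y) = ∫ y in Q, ∑ i, pd i (pd i u) y := rfl
    rw [this, integral_finset_sum _
      (fun i _ => integrableOn_unitCube (continuous_pd (cpd i) i))]
    exact Finset.sum_eq_zero fun i _ =>
      integral_pd_eq_zero (cpd i) (zperiodic_pd cu1 sol.hup i) i
  have intC : ∀ c : ℝ, (∫ _ in Q, c) = c := fun c => integral_const_unitCube c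
  -- Identity 1 : integrate the HJB equation over the unit cube
  have IlapU : IntegrableOn (fun y => lap u y) Q := integrableOn_unitCube claplu
  have IS : IntegrableOn (fun y => ∑ i, (pd i u y + P i) ^ 2) Q := integrableOn_unitCube cS
  have IS2 : IntegrableOn (fun y => (∑ i, (pd i u y + P i) ^ 2) / 2) Q := IS.div_const 2
  have Iv : IntegrableOn v Q := integrableOn_unitCube hvc
  have Imq : IntegrableOn (fun y => α ^ q * m y ^ q) Q :=
    integrableOn_unitCube (continuous_const.mul cmq)
  have IlapUneg : IntegrableOn (fun y => -lap u y) Q := IlapU.neg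
  have IA : IntegrableOn (fun y => -lap u y + (∑ i, (pd i u y + P i) ^ 2) / 2) Q :=
    IlapUneg.add IS2
  have IB : IntegrableOn (fun y => -lap u y + (∑ i, (pd i u y + P i) ^ 2) / 2 - v y) Q :=
    IA.sub Iv
  have hG1 : (∫ y in Q,
      (-lap u y + (∑ i, (pd i u y + P i) ^ 2) / 2 - v y - α ^ q * m y ^ q)) = H := by
    rw [setIntegral_congr_fun hQ (fun y _ => sol.hHJB y)]
    exact intC H
  rw [integral_sub IB Imq, integral_sub IA Iv, integral_add IlapUneg IS2, integral_neg,
    integral_div, integral_const_mul, hlap0] at hG1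
  have hF1 : H = S / 2 - V - X := by rw [hX, hV, hS]; linarith only [hG1]
  -- Identity 2 : integrate the HJB equation times m over the unit cube
  have Ilm : IntegrableOn (fun y => -lap u y * m y) Q :=
    integrableOn_unitCube (claplu.neg.mul cm)
  have ISm : IntegrableOn (fun y => (∑ i, (pd i u y + P i) ^ 2) * m y) Q :=
    integrableOn_unitCube (cS.mul cm)
  have ISm2 : IntegrableOn (fun y => ((∑ i, (pd i u y + P i) ^ 2) * m y) / 2) Q :=
    ISm.div_const 2
  have Ivm : IntegrableOn (fun y => v y * m y) Q := integrableOn_unitCube (hvc.mul cm)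
  have Imqm : IntegrableOn (fun y => α ^ q * (m y ^ q * m y)) Q :=
    integrableOn_unitCube (continuous_const.mul (cmq.mul cm))
  have IC : IntegrableOn (fun y => -lap u y * m y + ((∑ i, (pd i u y + P i) ^ 2) * m y) / 2) Q :=
    Ilm.add ISm2
  have ID : IntegrableOn
      (fun y => -lap u y * m y + ((∑ i, (pd i u y + P i) ^ 2) * m y) / 2 - v y * m y) Q :=
    IC.sub Ivm
  have hG2 : (∫ y in Q, (-lap u y * m y + ((∑ i, (pd i u y + P i) ^ 2) * m y) / 2 - v y * m y
      - α ^ q * (m y ^ q * m y))) = H := by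
    have heq : ∀ y ∈ Q, (-lap u y * m y + ((∑ i, (pd i u y + P i) ^ 2) * m y) / 2 - v y * m y
        - α ^ q * (m y ^ q * m y)) = H * m y := by
      intro y _
      have h := sol.hHJB y
      calc -lap u y * m y + ((∑ i, (pd i u y + P i) ^ 2) * m y) / 2 - v y * m y
            - α ^ q * (m y ^ q * m y)
          = (-lap u y + (∑ i, (pd i u y + P i) ^ 2) / 2 - v y - α ^ q * m y ^ q) * m y := by ring
        _ = H * m y := by rw [h]
    rw [setIntegral_congr_fun hQ heq, integral_const_mul, sol.hmmean, mul_one]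
  rw [integral_sub ID Imqm, integral_sub IC Ivm, integral_add Ilm ISm2, integral_div,
    integral_const_mul] at hG2
  -- integration by parts on the Laplacian term
  have Ipp : ∀ i : Fin (n+1), IntegrableOn (fun y => pd i u y * pd i m y) Q := fun i =>
    integrableOn_unitCube ((continuous_pd cu1 i).mul (continuous_pd cm1 i))
  have hlapm : (∫ y in Q, lap u y * m y) = - ∫ y in Q, ∑ i, pd i u y * pd i m y := by
    have h1 : ∀ y ∈ Q, lap u y * m y = ∑ i, pd i (pd i u) y * m y := by
      intro y _; unfold lap; rw [Finset.sum_mul]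
    rw [setIntegral_congr_fun hQ h1, integral_finset_sum _
        (fun i _ => integrableOn_unitCube ((continuous_pd (cpd i) i).fun_mul cm)),
      integral_finset_sum _ (fun i _ => Ipp i), ← Finset.sum_neg_distrib]
    exact Finset.sum_congr rfl fun i _ => by
      rw [integral_pd_mul (cpd i) cm1 (zperiodic_pd cu1 sol.hup i) sol.hmp i]
  set D : ℝ := ∫ y in Q, ∑ i, pd i u y * pd i m y with hD
  -- test the FP equation with u
  have perA : ∀ j : Fin (n+1), ZPeriodic (fun y => pd j u y + P j) := by
    intro j k x; simp only [zperiodic_pd cu1 sol.hup j k x]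
  have cF : ∀ j : Fin (n+1), ContDiff ℝ 1 (fun y => m y * (pd j u y + P j)) := fun j =>
    cm1.mul ((cpd j).add contDiff_const)
  have perF : ∀ j : Fin (n+1), ZPeriodic (fun y => m y * (pd j u y + P j)) := fun j =>
    zperiodic_mul sol.hmp (perA j)
  have IE0 : ∀ j : Fin (n+1), IntegrableOn (fun y => m y * (pd j u y + P j) * pd j u y) Q :=
    fun j => integrableOn_unitCube ((cm.mul (ca j)).mul (continuous_pd cu1 j))
  set E : ℝ := ∫ y in Q, ∑ j, m y * (pd j u y + P j) * pd j u y with hE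
  have hc1 : (∫ y in Q, u y * lap m y) = -D := by
    have h1 : ∀ y ∈ Q, u y * lap m y = ∑ i, pd i (pd i m) y * u y := by
      intro y _; unfold lap; rw [Finset.mul_sum]
      exact Finset.sum_congr rfl fun i _ => mul_comm _ _
    rw [setIntegral_congr_fun hQ h1, integral_finset_sum _
        (fun i _ => integrableOn_unitCube ((continuous_pd (cpdm i) i).fun_mul sol.hu.continuous)),
      hD, integral_finset_sum _ (fun i _ => Ipp i), ← Finset.sum_neg_distrib]
    refine Finset.sum_congr rfl fun i _ => ?_
    rw [integral_pd_mul (cpdm i) cu1 (zperiodic_pd cm1 sol.hmp i) sol.hup i]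
    congr 1
    exact setIntegral_congr_fun hQ fun y _ => mul_comm _ _
  have hc2 : (∫ y in Q, dvg (fun z j => m z * (pd j u z + P j)) y * u y) = -E := by
    have h1 : ∀ y ∈ Q, dvg (fun z j => m z * (pd j u z + P j)) y * u y
        = ∑ j, pd j (fun z => m z * (pd j u z + P j)) y * u y := by
      intro y _; unfold dvg; rw [Finset.sum_mul]
    rw [setIntegral_congr_fun hQ h1, integral_finset_sum _
        (fun j _ => integrableOn_unitCube ((continuous_pd (cF j) j).fun_mul sol.hu.continuous)),
      hE, integral_finset_sum _ (fun j _ => IE0 j), ← Finset.sum_neg_distrib]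
    refine Finset.sum_congr rfl fun j _ => ?_
    rw [integral_pd_mul (cF j) cu1 (perF j) sol.hup j]
  have hc3 : (∫ y in Q, u y * lap m y) = E := by
    have h1 : ∀ y ∈ Q, u y * lap m y
        = -(dvg (fun z j => m z * (pd j u z + P j)) y * u y) := by
      intro y _
      have h := sol.hFP y
      have hl : lap m y = -dvg (fun z j => m z * (pd j u z + P j)) y := by linarith
      rw [hl]; ring
    rw [setIntegral_congr_fun hQ h1, integral_neg, hc2, neg_neg]
  have hDE : D = -E := by have h := hc1; rw [hc3] at h; linarith only [h]
  -- the drift identity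
  have hTE : T - E = bP := by
    have ISm' : IntegrableOn (fun y => ∑ j, m y * (pd j u y + P j) * pd j u y) Q :=
      integrableOn_unitCube (continuous_finset_sum _
        (fun j _ => (cm.mul (ca j)).mul (continuous_pd cu1 j)))
    rw [hT, hE, ← integral_sub ISm ISm']
    have h1 : ∀ y ∈ Q, ((∑ i, (pd i u y + P i) ^ 2) * m y
        - ∑ j, m y * (pd j u y + P j) * pd j u y)
        = ∑ j, P j * ((pd j u y + P j) * m y) := by
      intro y _
      rw [Finset.sum_mul, ← Finset.sum_sub_distrib]
      exact Finset.sum_congr rfl fun j _ => by ring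
    rw [setIntegral_congr_fun hQ h1, integral_finset_sum _
      (fun j _ => integrableOn_unitCube (continuous_const.fun_mul ((ca j).fun_mul cm))), hbP]
    exact Finset.sum_congr rfl fun j _ => by rw [integral_const_mul, ← hb j]
  have hlm : (∫ y in Q, -lap u y * m y) = D := by
    have h1 : ∀ y ∈ Q, -lap u y * m y = -(lap u y * m y) := fun y _ => by ring
    rw [setIntegral_congr_fun hQ h1, integral_neg, hlapm, neg_neg]
  have hF2 : H = bP - T / 2 - W - Y := by linarith only [hG2, hlm, hDE, hTE, hT, hW, hY, hbP]
  -- nonnegativity facts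
  have hV0 : 0 ≤ V := hV ▸ setIntegral_nonneg hQ (fun y _ => hv0 y)
  have hW0 : 0 ≤ W := hW ▸ setIntegral_nonneg hQ (fun y _ => mul_nonneg (hv0 y) (hm0 y))
  have hT0 : 0 ≤ T := hT ▸ setIntegral_nonneg hQ (fun y _ =>
    mul_nonneg (Finset.sum_nonneg fun i _ => sq_nonneg _) (hm0 y))
  have hX0 : 0 ≤ X := hX ▸ mul_nonneg hαq
    (setIntegral_nonneg hQ (fun y _ => Real.rpow_nonneg (hm0 y) q))
  have h2q : (0:ℝ) ≤ (2:ℝ) ^ q := Real.rpow_nonneg (by norm_num) q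
  have hp20 : 0 ≤ p2 := hp2 ▸ Finset.sum_nonneg fun i _ => sq_nonneg _
  have hb20 : 0 ≤ b2 := hb2 ▸ Finset.sum_nonneg fun i _ => sq_nonneg _
  -- p2 ≤ S
  have hSsum : S = ∑ i, ∫ y in Q, (pd i u y + P i) ^ 2 := by
    rw [hS]; exact integral_finset_sum _ fun i _ => integrableOn_unitCube ((ca i).pow 2)
  have hPi : ∀ i : Fin (n+1), (∫ y in Q, (pd i u y + P i)) = P i := by
    intro i
    rw [integral_add (integrableOn_unitCube (continuous_pd cu1 i))
      (integrableOn_unitCube continuous_const), hpdu0 i, intC, zero_add]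
  have hp2S : p2 ≤ S := by
    rw [hp2, hSsum]
    refine Finset.sum_le_sum fun i _ => ?_
    have hcs : (∫ y in Q, (pd i u y + P i) * (fun _ => (1:ℝ)) y) ^ 2
        ≤ ∫ y in Q, (pd i u y + P i) ^ 2 * (fun _ => (1:ℝ)) y :=
      cs_cube (ca i) continuous_const (fun _ => zero_le_one) (intC 1)
    simp only [mul_one] at hcs
    rw [hPi i] at hcs
    exact hcs
  -- b2 ≤ T
  have hTsum : T = ∑ i, ∫ y in Q, (pd i u y + P i) ^ 2 * m y := by
    rw [hT]
    have h1 : ∀ y ∈ Q, (∑ i, (pd i u y + P i) ^ 2) * m y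
        = ∑ i, (pd i u y + P i) ^ 2 * m y := fun y _ => Finset.sum_mul _ _ _
    rw [setIntegral_congr_fun hQ h1]
    exact integral_finset_sum _ fun i _ => integrableOn_unitCube (((ca i).pow 2).fun_mul cm)
  have hb2T : b2 ≤ T := by
    rw [hb2, hTsum]
    refine Finset.sum_le_sum fun i _ => ?_
    have hcs : (∫ y in Q, (pd i u y + P i) * m y) ^ 2
        ≤ ∫ y in Q, (pd i u y + P i) ^ 2 * m y := cs_cube (ca i) cm hm0 sol.hmmean
    rw [← hb i] at hcs
    exact hcs
  -- Cauchy-Schwarz in ℝⁿ and AM-GM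
  have hcsf : bP ^ 2 ≤ p2 * b2 := by
    rw [hbP, hp2, hb2]; exact Finset.sum_mul_sq_le_sq_mul_sq Finset.univ P b
  have hbPle : bP ≤ (p2 + T) / 2 := aux_amgm hcsf hb2T hp20 hT0 hb20
  have hmmean' : (∫ y in Q, m y) = 1 := sol.hmmean
  -- X ≤ Y
  have hXY : X ≤ Y := by
    rw [hX, hY]
    refine mul_le_mul_of_nonneg_left ?_ hαq
    have hpt : ∀ y ∈ Q, m y ^ q ≤ m y ^ q * m y + (1 - m y) := by
      intro y _
      rcases le_total (m y) 1 with h | h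
      · exact aux_i1 (Real.rpow_le_one (hm0 y) h hq.le) h
      · exact aux_i2 (Real.one_le_rpow h hq.le) h
    have Iq : IntegrableOn (fun y => m y ^ q) Q := integrableOn_unitCube cmq
    have Iqm : IntegrableOn (fun y => m y ^ q * m y) Q := integrableOn_unitCube (cmq.mul cm)
    have I1m : IntegrableOn (fun y => 1 - m y) Q :=
      integrableOn_unitCube (continuous_const.sub cm)
    calc (∫ y in Q, m y ^ q) ≤ ∫ y in Q, (m y ^ q * m y + (1 - m y)) :=
          setIntegral_mono_on Iq (Iqm.add I1m) hQ hpt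
      _ = (∫ y in Q, m y ^ q * m y) + ((∫ _ in Q, (1:ℝ)) - ∫ y in Q, m y) := by
          rw [integral_add Iqm I1m,
            integral_sub (integrableOn_unitCube continuous_const) (integrableOn_unitCube cm)]
      _ = ∫ y in Q, m y ^ q * m y := by rw [intC, hmmean']; ring
  -- X ≤ Y/2 + α^q 2^q
  have hXY2 : X ≤ Y / 2 + α ^ q * 2 ^ q := by
    have hpt : ∀ y ∈ Q, m y ^ q ≤ m y ^ q * m y / 2 + 2 ^ q := by
      intro y _
      rcases le_total (m y) 2 with h | h
      · exact aux_i3 (Real.rpow_le_rpow (hm0 y) h hq.le)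
          (mul_nonneg (Real.rpow_nonneg (hm0 y) q) (hm0 y))
      · exact aux_i4 (mul_nonneg (Real.rpow_nonneg (hm0 y) q) (by linarith)) h2q
    have Iq : IntegrableOn (fun y => m y ^ q) Q := integrableOn_unitCube cmq
    have Iqm2 : IntegrableOn (fun y => m y ^ q * m y / 2) Q :=
      (integrableOn_unitCube (cmq.mul cm)).div_const 2
    have hint : (∫ y in Q, m y ^ q) ≤ (∫ y in Q, m y ^ q * m y) / 2 + 2 ^ q := by
      calc (∫ y in Q, m y ^ q) ≤ ∫ y in Q, (m y ^ q * m y / 2 + 2 ^ q) :=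
            setIntegral_mono_on Iq (Iqm2.add (integrableOn_unitCube continuous_const)) hQ hpt
        _ = (∫ y in Q, m y ^ q * m y) / 2 + 2 ^ q := by
            rw [integral_add Iqm2 (integrableOn_unitCube continuous_const), integral_div, intC]
    calc X = α ^ q * ∫ y in Q, m y ^ q := hX
      _ ≤ α ^ q * ((∫ y in Q, m y ^ q * m y) / 2 + 2 ^ q) :=
          mul_le_mul_of_nonneg_left hint hαq
      _ = Y / 2 + α ^ q * 2 ^ q := by rw [hY]; ring
  -- conclusion
  have hY0 : 0 ≤ Y := le_trans hX0 hXY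
  have hc0 : (0:ℝ) ≤ α ^ q * 2 ^ q := mul_nonneg hαq h2q
  have hYX : Y - X ≤ V := by linarith only [hF1, hF2, hbPle, hp2S, hW0]
  have hXC : X ≤ V + 2 * (α ^ q * 2 ^ q) := by linarith only [hXY2, hYX]
  constructor
  · rw [abs_le]
    constructor
    · linarith only [hF1, hp2S, hV0, hXC]
    · linarith only [hF2, hbPle, hW0, hV0, hY0, hc0]
  · have hexp : (∑ i, (b i - P i) ^ 2) = b2 - 2 * bP + p2 := by
      rw [hb2, hbP, hp2, Finset.mul_sum, ← Finset.sum_sub_distrib, ← Finset.sum_add_distrib]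
      exact Finset.sum_congr rfl fun i _ => by ring
    rw [hexp]
    linarith only [hF1, hF2, hb2T, hp2S, hW0, hXY]


/-- Asymptotics of the effective operators for large momenta (power case):
`H̄(P)/|P|² → 1/2` and `|b̄(P) - P|/|P| → 0` as `|P| → ∞`. -/
theorem power_mfg_asymptotics {n : ℕ} (hn : 1 ≤ n)
    (v : (Fin n → ℝ) → ℝ) (hv0 : ∀ x, 0 ≤ v x) (hvlip : ∃ K, LipschitzWith K v) (hvper : ZPeriodic v)
    (α q : ℝ) (hα : 0 ≤ α) (hq : 0 < q)
    (U M : (Fin n → ℝ) → (Fin n → ℝ) → ℝ) (Hb : (Fin n → ℝ) → ℝ)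
    (hsol : ∀ P, PowerMFG v P α q (U P) (M P) (Hb P))
    (b : (Fin n → ℝ) → Fin n → ℝ)
    (hb : ∀ P i, b P i = ∫ y in unitCube n, (pd i (U P) y + P i) * M P y) :
    Filter.Tendsto (fun P => Hb P / (∑ i, (P i) ^ 2))
        (Filter.comap (fun P : Fin n → ℝ => Real.sqrt (∑ i, (P i) ^ 2)) Filter.atTop)
        (nhds (1 / 2))
    ∧ Filter.Tendsto
        (fun P => Real.sqrt (∑ i, (b P i - P i) ^ 2) / Real.sqrt (∑ i, (P i) ^ 2))
        (Filter.comap (fun P : Fin n → ℝ => Real.sqrt (∑ i, (P i) ^ 2)) Filter.atTop)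
        (nhds 0) := by
  obtain ⟨k, rfl⟩ : ∃ k, n = k + 1 := ⟨n - 1, by omega⟩
  obtain ⟨K, hK⟩ := hvlip
  have hvc : Continuous v := hK.continuous
  set V : ℝ := ∫ y in unitCube (k+1), v y with hV
  set C1 : ℝ := 3 * V + 2 * (α ^ q * 2 ^ q) with hC1
  have hkey : ∀ P : Fin (k+1) → ℝ,
      |Hb P - (∑ i, (P i) ^ 2) / 2| ≤ C1 ∧ (∑ i, (b P i - P i) ^ 2) ≤ 2 * V := fun P =>
    key_bounds hv0 hvc hα hq (hsol P) (fun i => hb P i)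
  have hV0 : 0 ≤ V := hV ▸ setIntegral_nonneg measurableSet_unitCube (fun y _ => hv0 y)
  have hC10 : 0 ≤ C1 := by
    have h1 : (0:ℝ) ≤ α ^ q := Real.rpow_nonneg hα q
    have h2 : (0:ℝ) ≤ (2:ℝ) ^ q := Real.rpow_nonneg (by norm_num) q
    have := mul_nonneg h1 h2
    rw [hC1]; linarith only [this, hV0]
  constructor
  · rw [Metric.tendsto_nhds]
    intro ε hε
    have hev : ∀ᶠ P : Fin (k+1) → ℝ in
        Filter.comap (fun P => Real.sqrt (∑ i, (P i) ^ 2)) Filter.atTop,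
        max 1 ((C1 + 1) / ε) ≤ Real.sqrt (∑ i, (P i) ^ 2) :=
      Filter.tendsto_comap.eventually (Filter.eventually_ge_atTop _)
    filter_upwards [hev] with P hP
    have hs0 : 0 ≤ ∑ i, (P i) ^ 2 := Finset.sum_nonneg fun i _ => sq_nonneg _
    have hsq : Real.sqrt (∑ i, (P i) ^ 2) ^ 2 = ∑ i, (P i) ^ 2 := Real.sq_sqrt hs0
    have h1 : (1:ℝ) ≤ Real.sqrt (∑ i, (P i) ^ 2) := le_trans (le_max_left _ _) hP
    have h2 : (C1 + 1) / ε ≤ Real.sqrt (∑ i, (P i) ^ 2) := le_trans (le_max_right _ _) hP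
    have hsges : Real.sqrt (∑ i, (P i) ^ 2) ≤ ∑ i, (P i) ^ 2 := by
      have h0 : 0 ≤ Real.sqrt (∑ i, (P i) ^ 2) := Real.sqrt_nonneg _
      calc Real.sqrt (∑ i, (P i) ^ 2) = Real.sqrt (∑ i, (P i) ^ 2) * 1 := (mul_one _).symm
        _ ≤ Real.sqrt (∑ i, (P i) ^ 2) * Real.sqrt (∑ i, (P i) ^ 2) :=
            mul_le_mul_of_nonneg_left h1 h0
        _ = ∑ i, (P i) ^ 2 := by rw [← sq, hsq]
    have hspos : 0 < ∑ i, (P i) ^ 2 := lt_of_lt_of_le one_pos (le_trans h1 hsges)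
    have hden : C1 + 1 ≤ ε * ∑ i, (P i) ^ 2 := by
      have h3 : (C1 + 1) / ε * ε ≤ (∑ i, (P i) ^ 2) * ε :=
        mul_le_mul_of_nonneg_right (le_trans h2 hsges) hε.le
      rw [div_mul_cancel₀ _ hε.ne'] at h3
      linarith only [h3]
    have hnum := (hkey P).1
    rw [Real.dist_eq]
    have heq : Hb P / (∑ i, (P i) ^ 2) - 1 / 2
        = (Hb P - (∑ i, (P i) ^ 2) / 2) / (∑ i, (P i) ^ 2) := by
      field_simp
    rw [heq, abs_div, abs_of_pos hspos, div_lt_iff₀ hspos]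
    calc |Hb P - (∑ i, (P i) ^ 2) / 2| ≤ C1 := hnum
      _ < ε * ∑ i, (P i) ^ 2 := by linarith only [hden, hε]
  · rw [Metric.tendsto_nhds]
    intro ε hε
    have hev : ∀ᶠ P : Fin (k+1) → ℝ in
        Filter.comap (fun P => Real.sqrt (∑ i, (P i) ^ 2)) Filter.atTop,
        Real.sqrt (2 * V) / ε + 1 ≤ Real.sqrt (∑ i, (P i) ^ 2) :=
      Filter.tendsto_comap.eventually (Filter.eventually_ge_atTop _)
    filter_upwards [hev] with P hP
    have hs0 : 0 ≤ ∑ i, (P i) ^ 2 := Finset.sum_nonneg fun i _ => sq_nonneg _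
    have hrV0 : 0 ≤ Real.sqrt (2 * V) := Real.sqrt_nonneg _
    have hspos : 0 < Real.sqrt (∑ i, (P i) ^ 2) := by
      have : 0 ≤ Real.sqrt (2 * V) / ε := div_nonneg hrV0 hε.le
      linarith
    have hx : Real.sqrt (∑ i, (b P i - P i) ^ 2) ≤ Real.sqrt (2 * V) :=
      Real.sqrt_le_sqrt (hkey P).2
    rw [Real.dist_eq, sub_zero,
      abs_of_nonneg (div_nonneg (Real.sqrt_nonneg _) (Real.sqrt_nonneg _)),
      div_lt_iff₀ hspos]
    have h4 : (Real.sqrt (2 * V) / ε + 1) * ε ≤ Real.sqrt (∑ i, (P i) ^ 2) * ε :=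
      mul_le_mul_of_nonneg_right hP hε.le
    rw [add_mul, one_mul, div_mul_cancel₀ _ hε.ne'] at h4
    calc Real.sqrt (∑ i, (b P i - P i) ^ 2) ≤ Real.sqrt (2 * V) := hx
      _ < ε * Real.sqrt (∑ i, (P i) ^ 2) := by linarith only [h4, hε]
end

section
/- Integrated identities for the logarithmic system: if (u, m, H̄) is a classical solution of the logarithmic ergodic MFG system, then H̄ = ∫_Q [ ½(|P|² − |∇u|²) m − m log m − v m ] dy and H̄ = |P|²/2 + ∫_Q [ ½|∇u|² − log m − v ] dy. -/
set_option maxHeartbeats 1000000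


open MeasureTheory Real

/-- A classical solution `(u, m, H)` of the logarithmic ergodic MFG system
`-Δu + ½|∇u+P|² - v - log m = H`, `-Δm - div(m(∇u+P)) = 0`, `∫ u = 0`, `∫ m = 1`. -/
structure LogMFG {n : ℕ} (v : (Fin n → ℝ) → ℝ) (P : Fin n → ℝ)
    (u m : (Fin n → ℝ) → ℝ) (H : ℝ) : Prop where
  hu : ContDiff ℝ 2 u
  hm : ContDiff ℝ 2 m
  hup : ZPeriodic u
  hmp : ZPeriodic m
  hmpos : ∀ x, 0 < m x
  hHJB : ∀ x, -lap u x + (∑ i, (pd i u x + P i) ^ 2) / 2 - v x - Real.log (m x) = H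
  hFP : ∀ x, -lap m x - dvg (fun y j => m y * (pd j u y + P j)) x = 0
  humean : (∫ y in unitCube n, u y) = 0
  hmmean : (∫ y in unitCube n, m y) = 1

namespace LogMFGAux

variable {n : ℕ}

lemma pd_mul {f g : (Fin n → ℝ) → ℝ} {x} (i : Fin n)
    (hf : DifferentiableAt ℝ f x) (hg : DifferentiableAt ℝ g x) :
    pd i (fun y => f y * g y) x = f x * pd i g x + g x * pd i f x := by
  simp [pd, fderiv_fun_mul hf hg]

lemma pd_add {f g : (Fin n → ℝ) → ℝ} {x} (i : Fin n)
    (hf : DifferentiableAt ℝ f x) (hg : DifferentiableAt ℝ g x) :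
    pd i (fun y => f y + g y) x = pd i f x + pd i g x := by
  simp [pd, fderiv_fun_add hf hg]

lemma pd_sub {f g : (Fin n → ℝ) → ℝ} {x} (i : Fin n)
    (hf : DifferentiableAt ℝ f x) (hg : DifferentiableAt ℝ g x) :
    pd i (fun y => f y - g y) x = pd i f x - pd i g x := by
  simp [pd, fderiv_fun_sub hf hg]

lemma pd_neg {f : (Fin n → ℝ) → ℝ} {x} (i : Fin n) :
    pd i (fun y => -(f y)) x = -(pd i f x) := by
  simp [pd, fderiv_neg]

lemma pd_const_mul {f : (Fin n → ℝ) → ℝ} {c : ℝ} {x} (i : Fin n)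
    (hf : DifferentiableAt ℝ f x) :
    pd i (fun y => c * f y) x = c * pd i f x := by
  simp [pd, fderiv_const_mul hf]

lemma fderiv_zper {f : (Fin n → ℝ) → ℝ} (hf : Differentiable ℝ f)
    (hp : ZPeriodic f) (k : Fin n → ℤ) (x : Fin n → ℝ) :
    fderiv ℝ f (x + fun i => (k i : ℝ)) = fderiv ℝ f x := by
  set c : Fin n → ℝ := fun i => (k i : ℝ)
  have h1 : HasFDerivAt (fun y => f (y + c)) (fderiv ℝ f (x + c)) x := by
    have := (hf (x + c)).hasFDerivAt.comp x ((hasFDerivAt_id x).add_const c)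
    simpa [Function.comp_def] using this
  have h2 : (fun y => f (y + c)) = f := funext fun y => hp k y
  rw [h2] at h1
  exact (h1.fderiv).symm

lemma pd_zper {f : (Fin n → ℝ) → ℝ} (hf : Differentiable ℝ f)
    (hp : ZPeriodic f) (i : Fin n) : ZPeriodic (pd i f) := by
  intro k x
  simp only [pd, fderiv_zper hf hp k x]

lemma zper_mul {f g : (Fin n → ℝ) → ℝ} (hf : ZPeriodic f) (hg : ZPeriodic g) :
    ZPeriodic (fun y => f y * g y) := fun k x => by simp only [hf k x, hg k x]

lemma zper_add {f g : (Fin n → ℝ) → ℝ} (hf : ZPeriodic f) (hg : ZPeriodic g) :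
    ZPeriodic (fun y => f y + g y) := fun k x => by simp only [hf k x, hg k x]

lemma zper_sub {f g : (Fin n → ℝ) → ℝ} (hf : ZPeriodic f) (hg : ZPeriodic g) :
    ZPeriodic (fun y => f y - g y) := fun k x => by simp only [hf k x, hg k x]

lemma zper_neg {f : (Fin n → ℝ) → ℝ} (hf : ZPeriodic f) :
    ZPeriodic (fun y => -(f y)) := fun k x => by simp only [hf k x]

lemma zper_const_mul {f : (Fin n → ℝ) → ℝ} (c : ℝ) (hf : ZPeriodic f) :
    ZPeriodic (fun y => c * f y) := fun k x => by simp only [hf k x]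

lemma zper_add_const {f : (Fin n → ℝ) → ℝ} (c : ℝ) (hf : ZPeriodic f) :
    ZPeriodic (fun y => f y + c) := fun k x => by simp only [hf k x]

lemma pd_contDiff {f : (Fin n → ℝ) → ℝ} (hf : ContDiff ℝ 2 f) (i : Fin n) :
    ContDiff ℝ 1 (pd i f) :=
  (hf.fderiv_right (le_refl 2)).clm_apply contDiff_const

lemma pd_continuous {f : (Fin n → ℝ) → ℝ} (hf : ContDiff ℝ 1 f) (i : Fin n) :
    Continuous (pd i f) :=
  ((hf.continuous_fderiv one_ne_zero).clm_apply continuous_const)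

lemma cont_integrableOn {f : (Fin n → ℝ) → ℝ} (hf : Continuous f) :
    IntegrableOn f (unitCube n) :=
  hf.continuousOn.integrableOn_compact isCompact_Icc

lemma vol_cube : volume (unitCube n) = 1 := by
  rw [unitCube, Real.volume_Icc_pi]; simp

/-- The integral over the unit cube of the divergence of a periodic `C¹` vector
field vanishes (divergence theorem plus cancellation of opposite faces). -/
lemma integral_dvg_zero {n : ℕ} (F : (Fin (n+1) → ℝ) → Fin (n+1) → ℝ)
    (hF : ∀ i, ContDiff ℝ 1 (fun y => F y i)) (hFp : ∀ i, ZPeriodic (fun y => F y i)) :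
    ∫ x in unitCube (n+1), dvg F x = 0 := by
  have key := MeasureTheory.integral_divergence_of_hasFDerivAt_off_countable'
    (0 : Fin (n+1) → ℝ) 1 (zero_le_one) (fun i y => F y i)
    (fun i x => fderiv ℝ (fun y => F y i) x) ∅ Set.countable_empty
    (fun i => (hF i).continuous.continuousOn)
    (fun x _ i => ((hF i).differentiable one_ne_zero x).hasFDerivAt)
    (by
      have hc : Continuous (fun x => ∑ i, fderiv ℝ (fun y => F y i) x (Pi.single i 1)) :=
        continuous_finset_sum _ fun i _ =>
          ((hF i).continuous_fderiv one_ne_zero).clm_apply continuous_const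
      exact hc.continuousOn.integrableOn_compact isCompact_Icc)
  have hface : ∀ (i : Fin (n+1)) (x : Fin n → ℝ),
      F (Fin.insertNth i ((1 : Fin (n+1) → ℝ) i) x) i
        = F (Fin.insertNth i ((0 : Fin (n+1) → ℝ) i) x) i := by
    intro i x
    have := hFp i (Pi.single i 1) (Fin.insertNth i ((0 : Fin (n+1) → ℝ) i) x)
    have heq : (Fin.insertNth i ((0 : Fin (n+1) → ℝ) i) x
        + fun j => ((Pi.single i 1 : Fin (n+1) → ℤ) j : ℝ))
        = Fin.insertNth i ((1 : Fin (n+1) → ℝ) i) x := by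
      funext j
      refine Fin.succAboveCases i ?_ ?_ j
      · simp
      · intro j
        simp [Fin.insertNth_apply_succAbove, Pi.single_apply, (Fin.succAbove_ne i j)]
    rw [heq] at this
    exact this
  rw [show (unitCube (n+1)) = Set.Icc (0 : Fin (n+1) → ℝ) 1 from rfl]
  simp only [dvg, pd]
  rw [key]
  apply Finset.sum_eq_zero
  intro i _
  rw [sub_eq_zero]
  apply setIntegral_congr_fun (by measurability)
  intro x _
  exact hface i x

end LogMFGAux

open LogMFGAux

/-- Integrated identities for the logarithmic system. -/
theorem log_mfg_integrated_identities {n : ℕ} (hn : 1 ≤ n)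
    (v : (Fin n → ℝ) → ℝ) (hv0 : ∀ x, 0 ≤ v x) (hvlip : ∃ K, LipschitzWith K v) (hvper : ZPeriodic v)
    (P : Fin n → ℝ) (u m : (Fin n → ℝ) → ℝ) (H : ℝ)
    (h : LogMFG v P u m H) :
    H = (∫ y in unitCube n,
          (((∑ i, (P i) ^ 2) - ∑ i, (pd i u y) ^ 2) / 2 * m y
            - m y * Real.log (m y) - v y * m y))
    ∧ H = (∑ i, (P i) ^ 2) / 2
        + ∫ y in unitCube n,
            ((∑ i, (pd i u y) ^ 2) / 2 - Real.log (m y) - v y) := by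
  obtain ⟨N, rfl⟩ : ∃ N, n = N + 1 := ⟨n - 1, (Nat.succ_pred_eq_of_pos hn).symm⟩
  obtain ⟨K, hK⟩ := hvlip
  -- basic regularity facts
  have hu1 : ContDiff ℝ 1 u := h.hu.of_le one_le_two
  have hm1 : ContDiff ℝ 1 m := h.hm.of_le one_le_two
  have hud : Differentiable ℝ u := hu1.differentiable one_ne_zero
  have hmd : Differentiable ℝ m := hm1.differentiable one_ne_zero
  have hduC : ∀ j, ContDiff ℝ 1 (pd j u) := fun j => pd_contDiff h.hu j
  have hdmC : ∀ j, ContDiff ℝ 1 (pd j m) := fun j => pd_contDiff h.hm j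
  have hdud : ∀ j, Differentiable ℝ (pd j u) := fun j => (hduC j).differentiable one_ne_zero
  have hdmd : ∀ j, Differentiable ℝ (pd j m) := fun j => (hdmC j).differentiable one_ne_zero
  have hdup : ∀ j, ZPeriodic (pd j u) := fun j => pd_zper hud h.hup j
  have hdmp : ∀ j, ZPeriodic (pd j m) := fun j => pd_zper hmd h.hmp j
  have hvc : Continuous v := hK.continuous
  have hlogc : Continuous fun y => Real.log (m y) :=
    Continuous.log h.hm.continuous fun x => (h.hmpos x).ne'
  have hQmeas : MeasurableSet (unitCube (N + 1)) := measurableSet_Icc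
  -- expansion of the squared sum
  have hsq : ∀ y, ∑ i, (pd i u y + P i) ^ 2
      = (∑ i, (pd i u y) ^ 2) + 2 * (∑ i, P i * pd i u y) + ∑ i, (P i) ^ 2 := by
    intro y
    rw [Finset.mul_sum, ← Finset.sum_add_distrib, ← Finset.sum_add_distrib]
    exact Finset.sum_congr rfl fun i _ => by ring
  ---------------------------------------------------------------------------
  -- Second identity: integrate the HJB equation.
  ---------------------------------------------------------------------------
  have hVC : ∀ j : Fin (N + 1), ContDiff ℝ 1 (fun z => -(pd j u z) + P j * u z) :=
    fun j => ((hduC j).neg).add (contDiff_const.mul hu1)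
  have hVp : ∀ j : Fin (N + 1), ZPeriodic (fun z => -(pd j u z) + P j * u z) :=
    fun j => zper_add (zper_neg (hdup j)) (zper_const_mul _ h.hup)
  have hdvgV : ∀ y, dvg (fun z j => -(pd j u z) + P j * u z) y
      = -(lap u y) + ∑ j, P j * pd j u y := by
    intro y
    unfold dvg lap
    have hterm : ∀ j ∈ Finset.univ, pd j (fun z => -(pd j u z) + P j * u z) y
        = -(pd j (pd j u) y) + P j * pd j u y := by
      intro j _
      rw [pd_add (f := fun z => -(pd j u z)) (g := fun z => P j * u z) j ((hdud j).neg.differentiableAt) ((hud.const_mul _).differentiableAt),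
        pd_neg, pd_const_mul j hud.differentiableAt]
    rw [Finset.sum_congr rfl hterm, Finset.sum_add_distrib, Finset.sum_neg_distrib]
  have hdvgVc : Continuous (dvg (fun z j => -(pd j u z) + P j * u z)) := by
    unfold dvg
    exact continuous_finset_sum _ fun j _ => pd_continuous (hVC j) j
  have hpt2 : ∀ y, H = dvg (fun z j => -(pd j u z) + P j * u z) y
      + ((∑ i, (P i) ^ 2) / 2 + ((∑ i, (pd i u y) ^ 2) / 2 - Real.log (m y) - v y)) := by
    intro y
    rw [← h.hHJB y, hdvgV y, hsq y]
    ring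
  have hpduc : ∀ i : Fin (N + 1), Continuous (pd i u) := fun i => (hduC i).continuous
  have hSc : Continuous fun y => (∑ i, (pd i u y) ^ 2) / 2 - Real.log (m y) - v y :=
    (((continuous_finset_sum _ fun i _ => (hpduc i).pow 2).div_const 2).sub hlogc).sub hvc
  have hid2 : H = (∑ i, (P i) ^ 2) / 2
      + ∫ y in unitCube (N + 1), ((∑ i, (pd i u y) ^ 2) / 2 - Real.log (m y) - v y) := by
    have e0 : H = ∫ y in unitCube (N + 1), H := by
      rw [setIntegral_const, measureReal_def, vol_cube]; simp
    rw [e0, setIntegral_congr_fun hQmeas (fun y _ => hpt2 y),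
      integral_add (cont_integrableOn hdvgVc)
        (cont_integrableOn (f := fun y => (∑ i, (P i) ^ 2) / 2 + ((∑ i, (pd i u y) ^ 2) / 2 - Real.log (m y) - v y)) (continuous_const.add hSc)),
      integral_dvg_zero _ hVC hVp, zero_add,
      integral_add (cont_integrableOn continuous_const) (cont_integrableOn hSc),
      setIntegral_const, measureReal_def, vol_cube]
    simp
  ---------------------------------------------------------------------------
  -- First identity: multiply HJB by m, use the FP equation.
  ---------------------------------------------------------------------------
  have hWC : ∀ j : Fin (N + 1), ContDiff ℝ 1 (fun z =>
      u z * pd j m z - m z * pd j u z + u z * (m z * (pd j u z + P j))) :=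
    fun j => ((hu1.mul (hdmC j)).sub (hm1.mul (hduC j))).add
      (hu1.mul (hm1.mul ((hduC j).add contDiff_const)))
  have hWp : ∀ j : Fin (N + 1), ZPeriodic (fun z =>
      u z * pd j m z - m z * pd j u z + u z * (m z * (pd j u z + P j))) :=
    fun j => zper_add (zper_sub (zper_mul h.hup (hdmp j)) (zper_mul h.hmp (hdup j)))
      (zper_mul h.hup (zper_mul h.hmp (zper_add_const _ (hdup j))))
  have hdvgW : ∀ y, dvg (fun z j =>
      u z * pd j m z - m z * pd j u z + u z * (m z * (pd j u z + P j))) y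
      = u y * lap m y - m y * lap u y
        + ((∑ j, pd j u y * (m y * (pd j u y + P j)))
          + u y * dvg (fun z j => m z * (pd j u z + P j)) y) := by
    intro y
    unfold dvg lap
    have hgd : ∀ j : Fin (N + 1), DifferentiableAt ℝ (fun z => m z * (pd j u z + P j)) y :=
      fun j => (hmd.mul ((hdud j).add_const (P j))).differentiableAt
    have hterm : ∀ j ∈ Finset.univ, pd j (fun z =>
        u z * pd j m z - m z * pd j u z + u z * (m z * (pd j u z + P j))) y
        = (u y * pd j (pd j m) y - m y * pd j (pd j u) y)
          + (pd j u y * (m y * (pd j u y + P j))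
            + u y * pd j (fun z => m z * (pd j u z + P j)) y) := by
      intro j _
      rw [pd_add (f := fun z => u z * pd j m z - m z * pd j u z) (g := fun z => u z * (m z * (pd j u z + P j))) j (((hud.mul (hdmd j)).sub (hmd.mul (hdud j))).differentiableAt)
          ((hud.mul (hmd.mul ((hdud j).add_const (P j)))).differentiableAt),
        pd_sub (f := fun z => u z * pd j m z) (g := fun z => m z * pd j u z) j ((hud.mul (hdmd j)).differentiableAt) ((hmd.mul (hdud j)).differentiableAt),
        pd_mul j hud.differentiableAt ((hdmd j).differentiableAt),
        pd_mul j hmd.differentiableAt ((hdud j).differentiableAt),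
        pd_mul j hud.differentiableAt (hgd j)]
      ring
    rw [Finset.sum_congr rfl hterm, Finset.sum_add_distrib, Finset.sum_sub_distrib,
      Finset.sum_add_distrib, ← Finset.mul_sum, ← Finset.mul_sum, ← Finset.mul_sum]
  have hdvgWc : Continuous (dvg (fun z j =>
      u z * pd j m z - m z * pd j u z + u z * (m z * (pd j u z + P j)))) := by
    unfold dvg
    exact continuous_finset_sum _ fun j _ => pd_continuous (hWC j) j
  have hsum' : ∀ y, ∑ j, pd j u y * (m y * (pd j u y + P j))
      = m y * (∑ j, (pd j u y) ^ 2) + m y * ∑ j, P j * pd j u y := by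
    intro y
    rw [Finset.mul_sum, Finset.mul_sum, ← Finset.sum_add_distrib]
    exact Finset.sum_congr rfl fun j _ => by ring
  have hpt1 : ∀ y, m y * H
      = dvg (fun z j => u z * pd j m z - m z * pd j u z + u z * (m z * (pd j u z + P j))) y
        + (((∑ i, (P i) ^ 2) - ∑ i, (pd i u y) ^ 2) / 2 * m y
            - m y * Real.log (m y) - v y * m y) := by
    intro y
    have hfp := h.hFP y
    rw [← h.hHJB y, hdvgW y, hsq y, hsum' y]
    linear_combination (u y) * hfp
  have hTc : Continuous fun y =>
      ((∑ i, (P i) ^ 2) - ∑ i, (pd i u y) ^ 2) / 2 * m y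
        - m y * Real.log (m y) - v y * m y := by
    apply Continuous.sub
    apply Continuous.sub
    · exact ((continuous_const.sub
        (continuous_finset_sum _ fun i _ => (hpduc i).pow 2)).div_const 2).mul
        h.hm.continuous
    · exact h.hm.continuous.mul hlogc
    · exact hvc.mul h.hm.continuous
  have hid1 : H = ∫ y in unitCube (N + 1),
      (((∑ i, (P i) ^ 2) - ∑ i, (pd i u y) ^ 2) / 2 * m y
        - m y * Real.log (m y) - v y * m y) := by
    have e0 : H = ∫ y in unitCube (N + 1), m y * H := by
      rw [integral_mul_const, h.hmmean, one_mul]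
    rw [e0, setIntegral_congr_fun hQmeas (fun y _ => hpt1 y),
      integral_add (cont_integrableOn hdvgWc) (cont_integrableOn hTc),
      integral_dvg_zero _ hWC hWp, zero_add]
  exact ⟨hid1, hid2⟩
end
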